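/- arXiv:2305.05224 — 4 statements merged into one kernel-verified Lean document; each statement's English description precedes it below -/
import Mathlib

section
/- Let (T_n)_{n≥1} be a sequence of matrices in SL₂(ℝ) such that (1/n)·log‖T_n‖ → 0 as n → ∞, and such that the limit γ = lim_{n→∞} (1/n)·log‖T_n⋯T₁‖ exists and is strictly positive. Then there exists a one-dimensional linear subspace V₋ ⊆ ℝ² such that: (1) for every nonzero v ∈ V₋, lim_{n→∞} (1/n)·log‖T_n⋯T₁ v‖ = −γ; and (2) for every v ∈ ℝ² with v ∉ V₋, lim_{n→∞} (1/n)·log‖T_n⋯T₁ v‖ = γ. -/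
open Filter Topology

/-- The operator norm of a square real matrix, induced by the Euclidean norm. -/
noncomputable def opNorm {n : Type*} [Fintype n] [DecidableEq n] (M : Matrix n n ℝ) : ℝ :=
  ‖Matrix.toEuclideanCLM (𝕜 := ℝ) M‖

/-- `prodRev f n = f (n-1) * ⋯ * f 0`. -/
def prodRev {α : Type*} [Monoid α] (f : ℕ → α) (n : ℕ) : α :=
  ((List.range n).reverse.map f).prod

/-!
Write `A n = T (n-1) ⋯ T 0`. In dimension two a map of determinant `±1` stretches one unit
vector by `σ = ‖A n‖ ≥ 1` and shrinks the orthogonal unit vector `v n` by `σ⁻¹`, and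
`σ ≈ e^{γn}`. Since `A (n+1) = T n * A n` with `‖T n‖` subexponential, `A (n+1)` stretches
`v n` by at most `‖T n‖ / ‖A n‖`, so the component of `v n` along the stretched direction of
`A (n+1)` is at most `‖T n‖ / (‖A n‖ ‖A (n+1)‖) ≈ e^{-2γn}`. After fixing signs the `v n`
therefore converge, at rate `e^{-2γn}`, to a unit vector `u`, and
`‖A n u‖ ≤ ‖A n‖⁻¹ + ‖A n‖ ‖u - v n‖ ≈ e^{-γn}`. A vector off the line `ℝ u` keeps a component
bounded below along the stretched direction, so its image has norm `≈ ‖A n‖`. On the line,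
the matching lower bound is `‖A n x‖ ≥ ‖A n‖⁻¹ ‖x‖`, valid for every `x`.
-/

open Asymptotics Real Module
open scoped RealInnerProductSpace

/-- A real-valued form of `expGrowthSup |y| ≤ L`. -/
def ExpGrowthLE (y : ℕ → ℝ) (L : ℝ) : Prop :=
  ∀ ε > 0, y =O[atTop] fun n : ℕ => exp (n * (L + ε))

namespace ExpGrowthLE

variable {y z : ℕ → ℝ} {L M : ℝ}

lemma of_isBigO (hz : ExpGrowthLE z L) (hyz : y =O[atTop] z) : ExpGrowthLE y L :=
  fun ε hε => hyz.trans (hz ε hε)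

lemma add (hy : ExpGrowthLE y L) (hz : ExpGrowthLE z L) : ExpGrowthLE (y + z) L :=
  fun ε hε => (hy ε hε).add (hz ε hε)

lemma mul (hy : ExpGrowthLE y L) (hz : ExpGrowthLE z M) : ExpGrowthLE (y * z) (L + M) := by
  intro ε hε
  refine ((hy (ε / 2) (by positivity)).mul (hz (ε / 2) (by positivity))).congr_right fun n => ?_
  rw [← exp_add]
  ring_nf

lemma comp_add_one (hy : ExpGrowthLE y L) : ExpGrowthLE (fun n => y (n + 1)) L := by
  intro ε hε
  refine ((hy ε hε).comp_tendsto (tendsto_add_atTop_nat 1)).trans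
    (IsBigO.of_bound (exp (L + ε)) (Eventually.of_forall fun n => ?_))
  rw [Function.comp_apply, norm_of_nonneg (exp_pos _).le, norm_of_nonneg (exp_pos _).le,
    ← exp_add]
  exact exp_le_exp.2 (le_of_eq (by push_cast; ring))

lemma of_tendsto_log_div (h : Tendsto (fun n : ℕ => 1 / (n : ℝ) * log (y n)) atTop (𝓝 L)) :
    ExpGrowthLE y L := by
  intro ε hε
  refine IsBigO.of_bound 1 ?_
  filter_upwards [h.eventually (gt_mem_nhds (lt_add_of_pos_right L hε)), eventually_gt_atTop 0]
    with n hlog hn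
  have hn' : (0 : ℝ) < n := Nat.cast_pos.2 hn
  rw [one_div_mul_eq_div, div_lt_iff₀' hn'] at hlog
  rw [one_mul, norm_eq_abs, norm_of_nonneg (exp_pos _).le]
  rcases eq_or_ne (y n) 0 with hy | hy
  · simp [hy, (exp_pos _).le]
  · calc |y n| = exp (log (y n)) := by rw [← log_abs, exp_log (abs_pos.2 hy)]
      _ ≤ exp (n * (L + ε)) := exp_le_exp.2 hlog.le

lemma eventually_log_div_lt (hy : ∀ᶠ n in atTop, y n ≠ 0) (h : ExpGrowthLE y L) {a : ℝ}
    (ha : L < a) : ∀ᶠ n : ℕ in atTop, 1 / (n : ℝ) * log (y n) < a := by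
  obtain ⟨C, hC, hbound⟩ := (h ((a - L) / 2) (by linarith)).exists_pos
  have hlogC : ∀ᶠ n : ℕ in atTop, log C / n < (a - L) / 2 :=
    (tendsto_const_div_atTop_nhds_zero_nat (log C)).eventually (gt_mem_nhds (by linarith))
  filter_upwards [hy, hbound.bound, hlogC, eventually_gt_atTop 0] with n hyn hb hlogCn hn
  have hn' : (0 : ℝ) < n := Nat.cast_pos.2 hn
  rw [norm_eq_abs, norm_of_nonneg (exp_pos _).le] at hb
  have hlog : log (y n) ≤ log C + n * (L + (a - L) / 2) := by
    rw [← log_abs, ← log_exp (n * _), ← log_mul hC.ne' (exp_pos _).ne']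
    exact log_le_log (abs_pos.2 hyn) hb
  rw [div_lt_iff₀ hn'] at hlogCn
  rw [one_div_mul_eq_div, div_lt_iff₀ hn']
  nlinarith

lemma tendsto_log_div (hy : ∀ᶠ n in atTop, y n ≠ 0) (h : ExpGrowthLE y L)
    (h' : ExpGrowthLE (fun n => (y n)⁻¹) (-L)) :
    Tendsto (fun n : ℕ => 1 / (n : ℝ) * log (y n)) atTop (𝓝 L) := by
  refine tendsto_order.2 ⟨fun a ha => ?_, fun a ha => h.eventually_log_div_lt hy ha⟩
  filter_upwards [h'.eventually_log_div_lt (hy.mono fun n => inv_ne_zero) (neg_lt_neg ha)]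
    with n hn
  rw [log_inv, mul_neg] at hn
  linarith

lemma exists_le_geometric (h : ExpGrowthLE y L) {ε : ℝ} (hε : 0 < ε) :
    ∃ C > 0, ∀ n, y n ≤ C * exp (L + ε) ^ n := by
  obtain ⟨C, hC0, hC⟩ := bound_of_isBigO_nat_atTop (h ε hε)
  refine ⟨C, hC0, fun n => (le_abs_self _).trans ?_⟩
  simpa [← exp_nat_mul] using hC (exp_pos _).ne'

lemma exists_tendsto_dist {X : Type*} [MetricSpace X] [CompleteSpace X] {f : ℕ → X}
    (h : ExpGrowthLE (fun n => dist (f n) (f (n + 1))) L) (hL : L < 0) :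
    ∃ a, Tendsto f atTop (𝓝 a) ∧ ExpGrowthLE (fun n => dist (f n) a) L := by
  obtain ⟨C, -, hC⟩ := h.exists_le_geometric (ε := -L / 2) (by linarith)
  obtain ⟨a, ha⟩ := cauchySeq_tendsto_of_complete
    (cauchySeq_of_le_geometric _ C (exp_lt_one_iff.2 (by linarith)) hC)
  refine ⟨a, ha, fun ε hε => ?_⟩
  set ε' := min ε (-L / 2)
  have hε' : 0 < ε' := lt_min hε (by linarith)
  have hr : exp (L + ε') < 1 := exp_lt_one_iff.2 (by linarith [min_le_right ε (-L / 2)])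
  obtain ⟨C', hC'0, hC'⟩ := h.exists_le_geometric hε'
  refine IsBigO.of_bound (C' / (1 - exp (L + ε'))) (Eventually.of_forall fun n => ?_)
  have hdist := dist_le_of_le_geometric_of_tendsto _ C' hr hC' ha n
  rw [← exp_nat_mul] at hdist
  rw [norm_of_nonneg dist_nonneg, norm_of_nonneg (exp_pos _).le, div_mul_eq_mul_div]
  refine hdist.trans ?_
  gcongr
  exact min_le_left ε _

end ExpGrowthLE

variable {E : Type*} [NormedAddCommGroup E] [InnerProductSpace ℝ E]

lemma OrthonormalBasis.inner_sq_add_inner_sq (b : OrthonormalBasis (Fin 2) ℝ E) (x : E) :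
    ⟪b 0, x⟫ ^ 2 + ⟪b 1, x⟫ ^ 2 = ‖x‖ ^ 2 := by
  simpa [Fin.sum_univ_two] using b.sum_sq_inner_right x

lemma LinearMap.norm_sq_apply_eq_sum_eigenvalues [FiniteDimensional ℝ E] {n : ℕ}
    (f : E →ₗ[ℝ] E) (hS : (adjoint f * f).IsSymmetric) (hn : finrank ℝ E = n) (x : E) :
    ‖f x‖ ^ 2 = ∑ i, hS.eigenvalues hn i * ⟪hS.eigenvectorBasis hn i, x⟫ ^ 2 := by
  calc ‖f x‖ ^ 2 = ⟪(adjoint f * f) x, x⟫ := by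
        rw [Module.End.mul_apply, adjoint_inner_left, real_inner_self_eq_norm_sq]
    _ = ∑ i, ⟪(adjoint f * f) x, hS.eigenvectorBasis hn i⟫ *
          ⟪hS.eigenvectorBasis hn i, x⟫ :=
        ((hS.eigenvectorBasis hn).sum_inner_mul_inner _ _).symm
    _ = _ := by
        refine Finset.sum_congr rfl fun i _ => ?_
        rw [hS, hS.apply_eigenvectorBasis, real_inner_smul_right, real_inner_comm]
        simp only [RCLike.ofReal_real_eq_id, id_eq]
        ring

structure IsSingularBasis (f : E →L[ℝ] E) (b : OrthonormalBasis (Fin 2) ℝ E) (s : ℝ) :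
    Prop where
  one_le : 1 ≤ s
  norm_sq_apply (x : E) : ‖f x‖ ^ 2 = s ^ 2 * ⟪b 0, x⟫ ^ 2 + s⁻¹ ^ 2 * ⟪b 1, x⟫ ^ 2

lemma exists_isSingularBasis [FiniteDimensional ℝ E] (hE : finrank ℝ E = 2) (f : E →L[ℝ] E)
    (hf : |LinearMap.det (f : E →ₗ[ℝ] E)| = 1) : ∃ b s, IsSingularBasis f b s := by
  have hS := LinearMap.isSymmetric_adjoint_mul_self (f : E →ₗ[ℝ] E)
  have hdet : LinearMap.det (LinearMap.adjoint (f : E →ₗ[ℝ] E) * f.toLinearMap) = 1 := by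
    rw [Module.End.mul_eq_comp, ← LinearMap.normDet_sq, LinearMap.normDet_eq_abs_det, hf]
    simp
  have hprod := hS.det_eq_prod_eigenvalues hE
  have hnorm := LinearMap.norm_sq_apply_eq_sum_eigenvalues (f : E →ₗ[ℝ] E) hS hE
  simp only [Fin.sum_univ_two, ContinuousLinearMap.coe_coe] at hnorm
  set μ := hS.eigenvalues hE
  have hμ : μ 0 * μ 1 = 1 := by
    simpa [hdet, Fin.prod_univ_two] using hprod.symm
  have hμ1 : 0 ≤ μ 1 := by
    have h1 : ‖f (hS.eigenvectorBasis hE 1)‖ ^ 2 = μ 1 := by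
      simpa using hnorm (hS.eigenvectorBasis hE 1)
    exact h1 ▸ sq_nonneg _
  have hμ10 : μ 1 ≤ μ 0 := hS.eigenvalues_antitone hE (Fin.zero_le _)
  have hμ0 : 1 ≤ μ 0 := by nlinarith
  refine ⟨hS.eigenvectorBasis hE, √(μ 0), one_le_sqrt.2 hμ0, fun x => ?_⟩
  rw [hnorm, inv_pow, sq_sqrt (by linarith), eq_inv_of_mul_eq_one_right hμ]

namespace IsSingularBasis

variable {f g : E →L[ℝ] E} {b c : OrthonormalBasis (Fin 2) ℝ E} {s t : ℝ}

lemma pos (h : IsSingularBasis f b s) : 0 < s := one_pos.trans_le h.one_le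

lemma inv_sq_le_sq (h : IsSingularBasis f b s) : s⁻¹ ^ 2 ≤ s ^ 2 :=
  pow_le_pow_left₀ (inv_nonneg.2 h.pos.le) ((inv_le_one_of_one_le₀ h.one_le).trans h.one_le) 2

lemma mul_abs_inner_le (h : IsSingularBasis f b s) (x : E) : s * |⟪b 0, x⟫| ≤ ‖f x‖ := by
  refine (pow_le_pow_iff_left₀ (by positivity [h.pos]) (norm_nonneg _) two_ne_zero).1 ?_
  rw [h.norm_sq_apply, mul_pow, sq_abs]
  nlinarith [sq_nonneg (s⁻¹ * ⟪b 1, x⟫)]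

lemma inv_mul_norm_le (h : IsSingularBasis f b s) (x : E) : s⁻¹ * ‖x‖ ≤ ‖f x‖ := by
  refine (pow_le_pow_iff_left₀ (by positivity [h.pos]) (norm_nonneg _) two_ne_zero).1 ?_
  rw [h.norm_sq_apply, mul_pow, ← b.inner_sq_add_inner_sq]
  nlinarith [sq_nonneg ⟪b 0, x⟫, h.inv_sq_le_sq]

lemma norm_apply_pos (h : IsSingularBasis f b s) {x : E} (hx : x ≠ 0) : 0 < ‖f x‖ :=
  (mul_pos (inv_pos.2 h.pos) (norm_pos_iff.2 hx)).trans_le (h.inv_mul_norm_le x)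

lemma norm_apply_le (h : IsSingularBasis f b s) (x : E) : ‖f x‖ ≤ s * ‖x‖ := by
  refine (pow_le_pow_iff_left₀ (norm_nonneg _) (by positivity [h.pos]) two_ne_zero).1 ?_
  rw [h.norm_sq_apply, mul_pow, ← b.inner_sq_add_inner_sq]
  nlinarith [sq_nonneg ⟪b 1, x⟫, h.inv_sq_le_sq]

lemma norm_apply_zero (h : IsSingularBasis f b s) : ‖f (b 0)‖ = s := by
  rw [← sq_eq_sq₀ (norm_nonneg _) h.pos.le, h.norm_sq_apply]
  simp

lemma norm_apply_one (h : IsSingularBasis f b s) : ‖f (b 1)‖ = s⁻¹ := by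
  rw [← sq_eq_sq₀ (norm_nonneg _) (inv_nonneg.2 h.pos.le), h.norm_sq_apply]
  simp

lemma opNorm_eq (h : IsSingularBasis f b s) : ‖f‖ = s := by
  refine le_antisymm (f.opNorm_le_bound h.pos.le h.norm_apply_le) ?_
  simpa [h.norm_apply_zero] using f.le_opNorm (b 0)

lemma mul_abs_inner_le_of_norm_le (hf : IsSingularBasis f b s) (hg : IsSingularBasis g c t)
    {τ : ℝ} (hgf : ∀ x, ‖g x‖ ≤ τ * ‖f x‖) : t * |⟪c 0, b 1⟫| ≤ τ * s⁻¹ :=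
  calc t * |⟪c 0, b 1⟫| ≤ ‖g (b 1)‖ := hg.mul_abs_inner_le _
    _ ≤ τ * s⁻¹ := hf.norm_apply_one ▸ hgf _

end IsSingularBasis

noncomputable def alignSigns (v : ℕ → E) : ℕ → E
  | 0 => v 0
  | n + 1 => if ⟪alignSigns v n, v (n + 1)⟫ < 0 then -v (n + 1) else v (n + 1)

section alignSigns

variable (v : ℕ → E)

lemma alignSigns_eq_or_eq_neg (n : ℕ) : alignSigns v n = v n ∨ alignSigns v n = -v n := by
  cases n with
  | zero => exact Or.inl rfl
  | succ n =>
    simp only [alignSigns]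
    split_ifs
    exacts [Or.inr rfl, Or.inl rfl]

lemma abs_inner_alignSigns_left (n : ℕ) (x : E) : |⟪alignSigns v n, x⟫| = |⟪v n, x⟫| := by
  rcases alignSigns_eq_or_eq_neg v n with h | h <;> simp [h]

lemma inner_alignSigns_succ (n : ℕ) :
    ⟪alignSigns v n, alignSigns v (n + 1)⟫ = |⟪v n, v (n + 1)⟫| := by
  rw [← abs_inner_alignSigns_left, alignSigns]
  split_ifs with h
  · rw [inner_neg_right, abs_of_neg h]
  · rw [abs_of_nonneg (not_lt.1 h)]

variable {v}

lemma norm_alignSigns (hv : ∀ n, ‖v n‖ = 1) (n : ℕ) : ‖alignSigns v n‖ = 1 := by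
  rcases alignSigns_eq_or_eq_neg v n with h | h <;> simp [h, hv]

lemma dist_alignSigns_succ_sq (hv : ∀ n, ‖v n‖ = 1) (n : ℕ) :
    dist (alignSigns v n) (alignSigns v (n + 1)) ^ 2 = 2 - 2 * |⟪v n, v (n + 1)⟫| := by
  rw [dist_eq_norm, norm_sub_sq_real, norm_alignSigns hv, norm_alignSigns hv,
    inner_alignSigns_succ]
  ring

end alignSigns

lemma dist_alignSigns_succ_le (b : ℕ → OrthonormalBasis (Fin 2) ℝ E) (n : ℕ) :
    dist (alignSigns (fun n => b n 1) n) (alignSigns (fun n => b n 1) (n + 1)) ≤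
      2 * |⟪b (n + 1) 0, b n 1⟫| := by
  have hpar := (b (n + 1)).inner_sq_add_inner_sq (b n 1)
  rw [(b n).norm_eq_one, real_inner_comm (b n 1) (b (n + 1) 1)] at hpar
  have hsq := dist_alignSigns_succ_sq (v := fun n => b n 1) (fun n => (b n).norm_eq_one 1) n
  -- for `c = ⟪b n 1, b (n+1) 1⟫` and `s = ⟪b (n+1) 0, b n 1⟫` we have `c² + s² = 1`,
  -- so the squared distance is `2 - 2|c| ≤ 2 (1 - c²) = 2 s²`
  refine (pow_le_pow_iff_left₀ dist_nonneg (by positivity) two_ne_zero).1 ?_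
  have hc : |⟪b n 1, b (n + 1) 1⟫| ≤ 1 := by
    nlinarith [sq_abs ⟪b n 1, b (n + 1) 1⟫, abs_nonneg ⟪b n 1, b (n + 1) 1⟫]
  rw [hsq, mul_pow, sq_abs]
  nlinarith [sq_abs ⟪b n 1, b (n + 1) 1⟫, abs_nonneg ⟪b n 1, b (n + 1) 1⟫]

lemma inner_sq_lt_norm_sq_of_notMem_span {u x : E} (hu : ‖u‖ = 1) (hx : x ∉ ℝ ∙ u) :
    ⟪u, x⟫ ^ 2 < ‖x‖ ^ 2 := by
  have hne : |⟪u, x⟫| ≠ ‖u‖ * ‖x‖ := fun h => by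
    have := ((norm_inner_eq_norm_tfae ℝ u x).out 0 3).1 (by rwa [Real.norm_eq_abs])
    exact this.elim (fun h0 => by simp [h0] at hu) hx
  rw [hu, one_mul] at hne
  rw [← sq_abs]
  have hle : |⟪u, x⟫| ≤ ‖x‖ := (abs_real_inner_le_norm u x).trans_eq (by rw [hu, one_mul])
  exact pow_lt_pow_left₀ (hle.lt_of_ne hne) (abs_nonneg _) two_ne_zero

section Cocycle

variable {A B : ℕ → E →L[ℝ] E} {b : ℕ → OrthonormalBasis (Fin 2) ℝ E} {σ : ℕ → ℝ}
  {γ : ℝ}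

lemma expGrowthLE_dist_alignSigns (hb : ∀ n, IsSingularBasis (A n) (b n) (σ n))
    (hAB : ∀ n, A (n + 1) = B n * A n) (hB : ExpGrowthLE (fun n => ‖B n‖) 0)
    (hσinv : ExpGrowthLE (fun n => (σ n)⁻¹) (-γ)) :
    ExpGrowthLE (fun n => dist (alignSigns (fun n => b n 1) n)
      (alignSigns (fun n => b n 1) (n + 1))) (-(2 * γ)) := by
  have hstep (n : ℕ) : σ (n + 1) * |⟪b (n + 1) 0, b n 1⟫| ≤ ‖B n‖ * (σ n)⁻¹ :=
    (hb n).mul_abs_inner_le_of_norm_le (hb (n + 1)) fun x => by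
      rw [hAB]
      exact (B n).le_opNorm (A n x)
  have hrate := (hB.mul hσinv).mul hσinv.comp_add_one
  rw [show (0 : ℝ) + -γ + -γ = -(2 * γ) by ring] at hrate
  refine hrate.of_isBigO (IsBigO.of_bound 2 (Eventually.of_forall fun n => ?_))
  have hσpos := (hb n).pos
  have hσpos' := (hb (n + 1)).pos
  rw [norm_of_nonneg dist_nonneg, Pi.mul_apply, Pi.mul_apply, norm_of_nonneg (by positivity)]
  refine (dist_alignSigns_succ_le b n).trans ?_
  gcongr
  rw [le_mul_inv_iff₀ (hb _).pos, mul_comm]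
  exact hstep n

lemma expGrowthLE_norm_apply_of_dist (hb : ∀ n, IsSingularBasis (A n) (b n) (σ n))
    (hσ : ExpGrowthLE σ γ) (hσinv : ExpGrowthLE (fun n => (σ n)⁻¹) (-γ)) {ζ : ℕ → E}
    (hζ : ∀ n, ζ n = b n 1 ∨ ζ n = -b n 1) {u : E}
    (hu : ExpGrowthLE (fun n => dist (ζ n) u) (-(2 * γ))) :
    ExpGrowthLE (fun n => ‖A n u‖) (-γ) := by
  have hrate := hσ.mul hu
  rw [show γ + -(2 * γ) = -γ by ring] at hrate
  refine (hσinv.add hrate).of_isBigO (IsBigO.of_bound 1 (Eventually.of_forall fun n => ?_))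
  have hζn : ‖A n (ζ n)‖ = (σ n)⁻¹ := by
    rcases hζ n with h | h <;> simp [h, (hb n).norm_apply_one]
  have hσ0 := (hb n).pos.le
  rw [norm_norm, one_mul, Pi.add_apply, Pi.mul_apply, norm_of_nonneg (by positivity)]
  calc ‖A n u‖ = ‖A n (ζ n) + A n (u - ζ n)‖ := by rw [← map_add, add_sub_cancel]
    _ ≤ ‖A n (ζ n)‖ + ‖A n (u - ζ n)‖ := norm_add_le _ _
    _ ≤ (σ n)⁻¹ + σ n * dist (ζ n) u := by
        rw [hζn, dist_comm, dist_eq_norm]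
        gcongr
        exact (hb n).norm_apply_le _

lemma tendsto_log_norm_apply_of_mem_span (hb : ∀ n, IsSingularBasis (A n) (b n) (σ n))
    (hσ : ExpGrowthLE σ γ) {u : E} (hu : ExpGrowthLE (fun n => ‖A n u‖) (-γ)) {x : E}
    (hx : x ∈ ℝ ∙ u) (hx0 : x ≠ 0) :
    Tendsto (fun n : ℕ => 1 / (n : ℝ) * log ‖A n x‖) atTop (𝓝 (-γ)) := by
  obtain ⟨t, rfl⟩ := Submodule.mem_span_singleton.1 hx
  refine ExpGrowthLE.tendsto_log_div
    (Eventually.of_forall fun n => ((hb n).norm_apply_pos hx0).ne')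
    (hu.of_isBigO (IsBigO.of_bound |t| (Eventually.of_forall fun n => ?_))) ?_
  · simp [norm_smul]
  · rw [neg_neg]
    refine hσ.of_isBigO (IsBigO.of_bound ‖t • u‖⁻¹ (Eventually.of_forall fun n => ?_))
    have hpos := (hb n).norm_apply_pos hx0
    rw [norm_inv, norm_norm, norm_of_nonneg (hb n).pos.le,
      inv_le_comm₀ hpos (by positivity [(hb n).pos]), mul_inv, inv_inv, mul_comm]
    exact (hb n).inv_mul_norm_le _

lemma tendsto_log_norm_apply_of_notMem_span (hb : ∀ n, IsSingularBasis (A n) (b n) (σ n))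
    (hσ : ExpGrowthLE σ γ) (hσinv : ExpGrowthLE (fun n => (σ n)⁻¹) (-γ)) {ζ : ℕ → E}
    (hζ : ∀ n, ζ n = b n 1 ∨ ζ n = -b n 1) {u : E} (hlim : Tendsto ζ atTop (𝓝 u))
    (hu : ‖u‖ = 1) {x : E} (hx : x ∉ ℝ ∙ u) :
    Tendsto (fun n : ℕ => 1 / (n : ℝ) * log ‖A n x‖) atTop (𝓝 γ) := by
  have hx0 : x ≠ 0 := fun h => hx (h ▸ Submodule.zero_mem _)
  have hκ : 0 < ‖x‖ ^ 2 - ⟪u, x⟫ ^ 2 :=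
    sub_pos.2 (inner_sq_lt_norm_sq_of_notMem_span hu hx)
  have hcomp : ∀ n, ⟪b n 0, x⟫ ^ 2 = ‖x‖ ^ 2 - ⟪ζ n, x⟫ ^ 2 := fun n => by
    rw [← (b n).inner_sq_add_inner_sq x]
    rcases hζ n with h | h <;> simp [h]
  have hlim' : Tendsto (fun n => ⟪b n 0, x⟫ ^ 2) atTop (𝓝 (‖x‖ ^ 2 - ⟪u, x⟫ ^ 2)) := by
    simp only [hcomp]
    exact tendsto_const_nhds.sub ((hlim.inner tendsto_const_nhds).pow 2)
  set c := √((‖x‖ ^ 2 - ⟪u, x⟫ ^ 2) / 2)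
  have hc : 0 < c := sqrt_pos.2 (by positivity)
  have hlow : ∀ᶠ n in atTop, c * σ n ≤ ‖A n x‖ := by
    filter_upwards [hlim'.eventually (lt_mem_nhds (half_lt_self hκ))] with n hn
    have : c ≤ |⟪b n 0, x⟫| := by
      rw [← sqrt_sq_eq_abs]
      exact sqrt_le_sqrt hn.le
    nlinarith [(hb n).mul_abs_inner_le x, (hb n).pos]
  refine ExpGrowthLE.tendsto_log_div
    (Eventually.of_forall fun n => ((hb n).norm_apply_pos hx0).ne')
    (hσ.of_isBigO (IsBigO.of_bound ‖x‖ (Eventually.of_forall fun n => ?_)))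
    (hσinv.of_isBigO (IsBigO.of_bound c⁻¹ ?_))
  · rw [norm_norm, norm_of_nonneg (hb n).pos.le, mul_comm]
    exact (hb n).norm_apply_le x
  · filter_upwards [hlow] with n hn
    have hpos := mul_pos hc (hb n).pos
    rw [norm_inv, norm_norm, norm_inv, norm_of_nonneg (hb n).pos.le, ← mul_inv]
    exact inv_anti₀ hpos hn

theorem exists_finrank_eq_one_tendsto_log_norm_apply [FiniteDimensional ℝ E]
    (hE : finrank ℝ E = 2) (A B : ℕ → E →L[ℝ] E)
    (hdet : ∀ n, |LinearMap.det (A n : E →ₗ[ℝ] E)| = 1) (hAB : ∀ n, A (n + 1) = B n * A n)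
    (hγ : 0 < γ) (hB : Tendsto (fun n : ℕ => 1 / (n : ℝ) * log ‖B n‖) atTop (𝓝 0))
    (hA : Tendsto (fun n : ℕ => 1 / (n : ℝ) * log ‖A n‖) atTop (𝓝 γ)) :
    ∃ V : Submodule ℝ E, finrank ℝ V = 1 ∧
      (∀ x ∈ V, x ≠ 0 →
        Tendsto (fun n : ℕ => 1 / (n : ℝ) * log ‖A n x‖) atTop (𝓝 (-γ))) ∧
      (∀ x ∉ V, Tendsto (fun n : ℕ => 1 / (n : ℝ) * log ‖A n x‖) atTop (𝓝 γ)) := by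
  choose b σ hb using fun n => exists_isSingularBasis hE (A n) (hdet n)
  simp only [fun n => (hb n).opNorm_eq] at hA
  have hσ : ExpGrowthLE σ γ := .of_tendsto_log_div hA
  have hσinv : ExpGrowthLE (fun n => (σ n)⁻¹) (-γ) :=
    .of_tendsto_log_div (by simpa only [log_inv, mul_neg] using hA.neg)
  obtain ⟨u, hlim, hu⟩ := ExpGrowthLE.exists_tendsto_dist
    (expGrowthLE_dist_alignSigns hb hAB (.of_tendsto_log_div hB) hσinv) (by linarith)
  have hζ := alignSigns_eq_or_eq_neg fun n => b n 1
  have hu1 : ‖u‖ = 1 :=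
    tendsto_nhds_unique hlim.norm (by simp [norm_alignSigns fun n => (b n).norm_eq_one 1])
  refine ⟨ℝ ∙ u, finrank_span_singleton (norm_ne_zero_iff.1 (by simp [hu1])),
    fun x hx hx0 => ?_, fun x hx => ?_⟩
  · exact tendsto_log_norm_apply_of_mem_span hb hσ
      (expGrowthLE_norm_apply_of_dist hb hσ hσinv hζ hu) hx hx0
  · exact tendsto_log_norm_apply_of_notMem_span hb hσ hσinv hζ hlim hu1 hx

end Cocycle

lemma prodRev_succ {α : Type*} [Monoid α] (f : ℕ → α) (n : ℕ) :
    prodRev f (n + 1) = f n * prodRev f n := by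
  simp [prodRev, List.range_succ]

lemma Matrix.det_toEuclideanCLM {n : Type*} [Fintype n] [DecidableEq n] (M : Matrix n n ℝ) :
    LinearMap.det (Matrix.toEuclideanCLM (𝕜 := ℝ) M).toLinearMap = M.det :=
  LinearMap.det_toLin _ M

/-- **Oseledets' theorem in SL₂(ℝ), deterministic form (Ruelle).**
If `(T n)` is a sequence of matrices of determinant 1 such that `(1/n) log ‖T n‖ → 0` and
`(1/n) log ‖T (n-1) ⋯ T 0‖ → γ > 0`, then there is a one-dimensional subspace `V₋` of ℝ²
such that `(1/n) log ‖T (n-1) ⋯ T 0 · v‖ → -γ` for every nonzero `v ∈ V₋`, and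
`(1/n) log ‖T (n-1) ⋯ T 0 · v‖ → γ` for every `v ∉ V₋`. -/
theorem oseledets_SL2 (T : ℕ → Matrix (Fin 2) (Fin 2) ℝ)
    (hdet : ∀ n, (T n).det = 1) (γ : ℝ) (hγpos : 0 < γ)
    (hT : Tendsto (fun n : ℕ => (1 / (n : ℝ)) * Real.log (opNorm (T n))) atTop (𝓝 0))
    (hprod : Tendsto (fun n : ℕ => (1 / (n : ℝ)) * Real.log (opNorm (prodRev T n)))
      atTop (𝓝 γ)) :
    ∃ V : Submodule ℝ (EuclideanSpace ℝ (Fin 2)), Module.finrank ℝ V = 1 ∧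
      (∀ v ∈ V, v ≠ 0 →
        Tendsto (fun n : ℕ =>
            (1 / (n : ℝ)) * Real.log ‖Matrix.toEuclideanCLM (𝕜 := ℝ) (prodRev T n) v‖)
          atTop (𝓝 (-γ))) ∧
      (∀ v : EuclideanSpace ℝ (Fin 2), v ∉ V →
        Tendsto (fun n : ℕ =>
            (1 / (n : ℝ)) * Real.log ‖Matrix.toEuclideanCLM (𝕜 := ℝ) (prodRev T n) v‖)
          atTop (𝓝 γ)) := by
  have hdet_prod (n : ℕ) : (prodRev T n).det = 1 := by
    induction n with
    | zero => simp [prodRev]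
    | succ n ih => rw [prodRev_succ, Matrix.det_mul, hdet, ih, one_mul]
  exact exists_finrank_eq_one_tendsto_log_norm_apply finrank_euclideanSpace_fin
    (fun n => Matrix.toEuclideanCLM (𝕜 := ℝ) (prodRev T n))
    (fun n => Matrix.toEuclideanCLM (𝕜 := ℝ) (T n))
    (fun n => by simp [Matrix.det_toEuclideanCLM, hdet_prod])
    (fun n => by rw [prodRev_succ, map_mul]) hγpos hT hprod
end

section
/- Fix E ∈ ℝ and two distinct real numbers a ≠ b. Let A_a = [[a−E, −1],[1, 0]] and A_b = [[b−E, −1],[1, 0]], both elements of SL₂(ℝ), and let G be the closure, in the space of 2×2 real matrices, of the subgroup generated by A_a and A_b. Then G is not a compact subset of the 2×2 real matrices, and G is strongly irreducible. -/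
/-!
The group contains `A_a A_b⁻¹ = [[1, a - b], [0, 1]]`, a nontrivial unipotent matrix whose powers
have unbounded upper-right entry; hence the closure is not compact. A finite union `W` of lines
invariant under these powers must consist of multiples of `e₁`: a vector with second coordinate
`t ≠ 0` has an infinite orbit in the affine line `{x₂ = t}`, which meets each line of `W` at most
once. But `A_a e₁ = (a - E, 1)` does not lie on the line `ℝ e₁`.
-/

open Filter Topology

/-- The subgroup (as a set of matrices) generated by a set `S` of invertible matrices:
the multiplicative closure of `S` together with its inverses. -/
def matGenGroup {n R : Type*} [Fintype n] [DecidableEq n] [CommRing R]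
    (S : Set (Matrix n n R)) : Set (Matrix n n R) :=
  {A | A ∈ Submonoid.closure (S ∪ (Inv.inv '' S))}

/-- A set of 2×2 real matrices is strongly irreducible if there is no nonempty finite union of
one-dimensional subspaces of ℝ² that is invariant under every element of the set. -/
def StronglyIrreducible (T : Set (Matrix (Fin 2) (Fin 2) ℝ)) : Prop :=
  ¬ ∃ (k : ℕ) (V : Fin (k + 1) → Submodule ℝ (EuclideanSpace ℝ (Fin 2))),
      (∀ i, Module.finrank ℝ (V i) = 1) ∧
      ∀ M ∈ T, (fun v => Matrix.toEuclideanCLM (𝕜 := ℝ) M v) ''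
          (⋃ i, (V i : Set (EuclideanSpace ℝ (Fin 2)))) =
        ⋃ i, (V i : Set (EuclideanSpace ℝ (Fin 2)))

/-- Transfer matrix of the 1-dimensional discrete Anderson model at energy `E` with
potential value `a`. -/
def transferMat (a E : ℝ) : Matrix (Fin 2) (Fin 2) ℝ := !![a - E, -1; 1, 0]

section Lines

variable {K V : Type*} [Field K] [AddCommGroup V] [Module K V]

theorem Submodule.inter_preimage_subsingleton_of_finrank_eq_one {L : Submodule K V}
    (hL : Module.finrank K L = 1) (f : V →ₗ[K] K) {t : K} (ht : t ≠ 0) :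
    ((L : Set V) ∩ f ⁻¹' {t}).Subsingleton := by
  rintro x ⟨hxL, hx⟩ y ⟨hyL, hy⟩
  obtain ⟨u, -, hu⟩ := finrank_eq_one_iff'.mp hL
  obtain ⟨r, hr⟩ := hu ⟨x, hxL⟩
  obtain ⟨s, hs⟩ := hu ⟨y, hyL⟩
  replace hr : r • (u : V) = x := congrArg Subtype.val hr
  replace hs : s • (u : V) = y := congrArg Subtype.val hs
  subst hr hs
  simp only [Set.mem_preimage, Set.mem_singleton_iff, map_smul, smul_eq_mul] at hx hy
  have hfu : f u ≠ 0 := right_ne_zero_of_mul (hx ▸ ht)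
  rw [mul_right_cancel₀ hfu (hx.trans hy.symm)]

theorem finite_iUnion_inter_preimage_of_finrank_eq_one {ι : Type*} [Finite ι]
    {L : ι → Submodule K V} (hL : ∀ i, Module.finrank K (L i) = 1) (f : V →ₗ[K] K) {t : K}
    (ht : t ≠ 0) : ((⋃ i, (L i : Set V)) ∩ f ⁻¹' {t}).Finite := by
  rw [Set.iUnion_inter]
  exact Set.finite_iUnion fun i =>
    ((L i).inter_preimage_subsingleton_of_finrank_eq_one (hL i) f ht).finite

end Lines

theorem unipotent_pow (c : ℝ) (n : ℕ) :
    (!![1, c; 0, 1] : Matrix (Fin 2) (Fin 2) ℝ) ^ n = !![1, n * c; 0, 1] := by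
  induction n with
  | zero => simp [Matrix.one_fin_two]
  | succ n ih =>
    rw [pow_succ, ih, Matrix.mul_fin_two]
    simp [add_one_mul, add_comm]

theorem toEuclideanCLM_apply_zero (M : Matrix (Fin 2) (Fin 2) ℝ) (v : EuclideanSpace ℝ (Fin 2)) :
    Matrix.toEuclideanCLM (𝕜 := ℝ) M v 0 = M 0 0 * v 0 + M 0 1 * v 1 := by
  simp [Matrix.mulVec, dotProduct, Fin.sum_univ_two]

theorem toEuclideanCLM_apply_one (M : Matrix (Fin 2) (Fin 2) ℝ) (v : EuclideanSpace ℝ (Fin 2)) :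
    Matrix.toEuclideanCLM (𝕜 := ℝ) M v 1 = M 1 0 * v 0 + M 1 1 * v 1 := by
  simp [Matrix.mulVec, dotProduct, Fin.sum_univ_two]

theorem not_isCompact_of_unipotent_mem {T : Set (Matrix (Fin 2) (Fin 2) ℝ)} {c : ℝ} (hc : c ≠ 0)
    (hT : ∀ n : ℕ, !![1, n * c; 0, 1] ∈ T) : ¬ IsCompact T := by
  intro hcomp
  obtain ⟨C, hC⟩ := (hcomp.image (continuous_id.matrix_elem 0 1).abs).bddAbove
  obtain ⟨n, hn⟩ := exists_nat_gt (C / |c|)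
  have hnC : n * |c| ≤ C := by simpa [abs_mul] using hC ⟨_, hT n, rfl⟩
  rw [div_lt_iff₀ (abs_pos.mpr hc)] at hn
  linarith

theorem apply_one_eq_zero_of_unipotent_mapsTo {ι : Type*} [Finite ι]
    {L : ι → Submodule ℝ (EuclideanSpace ℝ (Fin 2))} (hL : ∀ i, Module.finrank ℝ (L i) = 1)
    {c : ℝ} (hc : c ≠ 0)
    (hmaps : ∀ n : ℕ, Set.MapsTo (Matrix.toEuclideanCLM (𝕜 := ℝ) !![1, n * c; 0, 1])
      (⋃ i, (L i : Set _)) (⋃ i, (L i : Set _)))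
    {v : EuclideanSpace ℝ (Fin 2)} (hv : v ∈ ⋃ i, (L i : Set _)) : v 1 = 0 := by
  by_contra hv1
  set orbit : ℕ → EuclideanSpace ℝ (Fin 2) :=
    fun n => Matrix.toEuclideanCLM (𝕜 := ℝ) !![1, n * c; 0, 1] v
  have horbit_injective : Function.Injective orbit := by
    intro m n hmn
    simpa [orbit, toEuclideanCLM_apply_zero, hc, hv1] using congrArg (· 0) hmn
  refine (Set.infinite_range_of_injective horbit_injective)
    (finite_iUnion_inter_preimage_of_finrank_eq_one hL (EuclideanSpace.proj 1).toLinearMap hv1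
      |>.subset ?_)
  rintro _ ⟨n, rfl⟩
  refine ⟨hmaps n hv, ?_⟩
  simp [orbit, toEuclideanCLM_apply_one]

theorem stronglyIrreducible_of_unipotent_mem {T : Set (Matrix (Fin 2) (Fin 2) ℝ)} {c : ℝ}
    (hc : c ≠ 0) (hT : ∀ n : ℕ, !![1, n * c; 0, 1] ∈ T) {M : Matrix (Fin 2) (Fin 2) ℝ}
    (hMT : M ∈ T) (hM : M 1 0 ≠ 0) : StronglyIrreducible T := by
  rintro ⟨k, L, hL, hinv⟩
  have hmaps : ∀ N ∈ T, Set.MapsTo (Matrix.toEuclideanCLM (𝕜 := ℝ) N)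
      (⋃ i, (L i : Set _)) (⋃ i, (L i : Set _)) := fun N hN v hv =>
    hinv N hN ▸ ⟨v, hv, rfl⟩
  have hline : ∀ {v : EuclideanSpace ℝ (Fin 2)}, v ∈ ⋃ i, (L i : Set _) → v 1 = 0 :=
    apply_one_eq_zero_of_unipotent_mapsTo hL hc fun n => hmaps _ (hT n)
  obtain ⟨u, hu, -⟩ := finrank_eq_one_iff'.mp (hL 0)
  have huW : (u : EuclideanSpace ℝ (Fin 2)) ∈ ⋃ i, (L i : Set _) := Set.mem_iUnion.mpr ⟨0, u.2⟩
  have hu1 : (u : EuclideanSpace ℝ (Fin 2)) 1 = 0 := hline huW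
  have hu0 : (u : EuclideanSpace ℝ (Fin 2)) 0 ≠ 0 := by
    refine fun hu0 => hu (Subtype.ext (PiLp.ext fun j => ?_))
    fin_cases j <;> assumption
  have hMu := hline (hmaps M hMT huW)
  rw [toEuclideanCLM_apply_one, hu1, mul_zero, add_zero] at hMu
  exact mul_ne_zero hM hu0 hMu

theorem transferMat_mul_inv (a b E : ℝ) :
    transferMat a E * (transferMat b E)⁻¹ = !![1, a - b; 0, 1] := by
  rw [Matrix.inv_eq_right_inv (B := !![0, 1; -1, b - E])]
  · simp [transferMat]
  · simp [transferMat, Matrix.one_fin_two]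

theorem unipotent_mem_matGenGroup_transferMat (a b E : ℝ) (n : ℕ) :
    !![1, n * (a - b); 0, 1] ∈ matGenGroup {transferMat a E, transferMat b E} := by
  rw [← unipotent_pow, ← transferMat_mul_inv a b E]
  exact pow_mem (mul_mem (Submonoid.subset_closure (.inl (.inl rfl)))
    (Submonoid.subset_closure (.inr ⟨_, .inr rfl, rfl⟩))) n

theorem transferMat_mem_matGenGroup (a b E : ℝ) :
    transferMat a E ∈ matGenGroup {transferMat a E, transferMat b E} :=
  Submonoid.subset_closure (.inl (.inl rfl))

/-- For any energy `E` and two distinct potential values `a ≠ b`, the closure (in the space of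
2×2 real matrices) of the group generated by the two transfer matrices `A_a`, `A_b` is
non-compact and strongly irreducible. -/
theorem transfer_group_noncompact_stronglyIrreducible (E a b : ℝ) (hab : a ≠ b) :
    ¬ IsCompact (closure (matGenGroup {transferMat a E, transferMat b E})) ∧
      StronglyIrreducible (closure (matGenGroup {transferMat a E, transferMat b E})) := by
  have hc : a - b ≠ 0 := sub_ne_zero.mpr hab
  have hunip := fun n => subset_closure (unipotent_mem_matGenGroup_transferMat a b E n)
  refine ⟨not_isCompact_of_unipotent_mem hc hunip,
    stronglyIrreducible_of_unipotent_mem hc hunip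
      (subset_closure (transferMat_mem_matGenGroup a b E)) ?_⟩
  simp [transferMat]
end

section
/- Let D ≥ 1, let V₀ be the D×D real matrix with all diagonal entries 0, with entries 1 on the sub-diagonal and super-diagonal, and 0 elsewhere, and for E ∈ ℝ and v ∈ {0,1}^D let T_v(E) = [[V₀ + diag(v₁,…,v_D) − E·I_D, −I_D],[I_D, 0]] ∈ Sp_D(ℝ). Let G_E be the subgroup of Sp_D(ℝ) generated by {T_v(E) : v ∈ {0,1}^D}. Then for every E ∈ ℝ, every real polynomial in the 2D×2D matrix entries that vanishes at every element of G_E also vanishes at every block matrix [[I_D, Δ],[0, I_D]] where Δ is an arbitrary D×D real diagonal matrix. -/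
/-!
For binary potentials `v, w` one computes `T_v(E) T_w(E)⁻¹ = [[I, diag (v - w)], [0, I]]`, so
`G_E` contains `[[I, ±diag eᵢ], [0, I]]`. As `d ↦ [[I, diag d], [0, I]]` turns addition into
multiplication, `G_E` contains `[[I, diag z], [0, I]]` for every `z ∈ ℤ^D`. Hence
`d ↦ P [[I, diag d], [0, I]]` is a polynomial in `d` vanishing on `ℤ^D`, so it is zero.
-/

open scoped Matrix

/-- The standard symplectic form matrix `J = [[0, -I],[I, 0]]`. -/
def Jmat (D : ℕ) : Matrix (Fin D ⊕ Fin D) (Fin D ⊕ Fin D) ℝ :=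
  Matrix.fromBlocks 0 (-1) 1 0

/-- The symplectic group `Sp_D(ℝ)`, as a set of `2D × 2D` real matrices `M` with
`Mᵀ J M = J`. -/
def SpSet (D : ℕ) : Set (Matrix (Fin D ⊕ Fin D) (Fin D ⊕ Fin D) ℝ) :=
  {M | Mᵀ * Jmat D * M = Jmat D}

/-- The free interaction matrix `V₀`: zero diagonal, `1` on the sub- and super-diagonal. -/
def V0 (D : ℕ) : Matrix (Fin D) (Fin D) ℝ :=
  Matrix.of fun i j => if (i : ℕ) + 1 = (j : ℕ) ∨ (j : ℕ) + 1 = (i : ℕ) then 1 else 0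

/-- Transfer matrix of the discrete quasi-one-dimensional Anderson–Bernoulli model:
`T_v(E) = [[V₀ + diag v − E·I, −I],[I, 0]]`. -/
def transferQ1D (D : ℕ) (E : ℝ) (v : Fin D → ℝ) :
    Matrix (Fin D ⊕ Fin D) (Fin D ⊕ Fin D) ℝ :=
  Matrix.fromBlocks (V0 D + Matrix.diagonal v - E • 1) (-1) 1 0

open MvPolynomial Matrix

theorem MvPolynomial.eq_zero_of_eval_intCast_eq_zero {σ R : Type*} [CommRing R] [IsDomain R]
    [CharZero R] {p : MvPolynomial σ R} (h : ∀ z : σ → ℤ, eval (fun i => (z i : R)) p = 0) :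
    p = 0 := by
  refine funext_set (fun _ => Set.range ((↑) : ℤ → R))
    (fun _ => Set.infinite_range_of_injective Int.cast_injective) fun x hx => ?_
  choose z hz using fun i => hx i (Set.mem_univ i)
  obtain rfl : (fun i => (z i : R)) = x := _root_.funext hz
  exact h z

theorem MvPolynomial.eval_bind₁ {σ τ R : Type*} [CommSemiring R] (f : σ → MvPolynomial τ R)
    (P : MvPolynomial σ R) (x : τ → R) :
    eval x (bind₁ f P) = eval (fun i => eval x (f i)) P :=
  eval₂Hom_bind₁ _ _ _ _

theorem Pi.intCast_mem_closure_range_single {ι R : Type*} [Fintype ι] [DecidableEq ι]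
    [AddCommGroupWithOne R] (z : ι → ℤ) :
    (fun i => (z i : R)) ∈ AddSubgroup.closure (Set.range fun i => Pi.single i (1 : R)) := by
  rw [← Finset.univ_sum_single (fun i => (z i : R) : ι → R)]
  refine sum_mem fun i _ => ?_
  rw [← zsmul_one, Pi.single_zsmul]
  exact zsmul_mem (AddSubgroup.subset_closure (Set.mem_range_self i)) _

section unipotentDiag

variable {n R : Type*} [DecidableEq n] [CommRing R]

def unipotentDiag (d : n → R) : Matrix (n ⊕ n) (n ⊕ n) R :=
  fromBlocks 1 (diagonal d) 0 1

@[simp]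
theorem unipotentDiag_zero : unipotentDiag (0 : n → R) = 1 := by
  simp [unipotentDiag]

theorem unipotentDiag_add [Fintype n] (d e : n → R) :
    unipotentDiag (d + e) = unipotentDiag d * unipotentDiag e := by
  simp [unipotentDiag, fromBlocks_multiply, add_comm]

theorem map_unipotentDiag {S : Type*} [CommRing S] (f : R →+* S) (d : n → R) :
    (unipotentDiag d).map f = unipotentDiag (f ∘ d) := by
  simp [unipotentDiag, fromBlocks_map, diagonal_map]

theorem eval_unipotentDiag_X (d : n → R) (i j : n ⊕ n) :
    eval d (unipotentDiag (X : n → MvPolynomial n R) i j) = unipotentDiag d i j := by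
  simpa [Function.comp_def] using
    congr($(map_unipotentDiag (eval d) (X : n → MvPolynomial n R)) i j)

theorem unipotentDiag_mem_of_mem_closure [Fintype n] {M : Submonoid (Matrix (n ⊕ n) (n ⊕ n) R)}
    {s : Set (n → R)} (hs : ∀ d ∈ s, unipotentDiag d ∈ M ∧ unipotentDiag (-d) ∈ M)
    {d : n → R} (hd : d ∈ AddSubgroup.closure s) : unipotentDiag d ∈ M := by
  rw [← AddSubgroup.mem_toAddSubmonoid, AddSubgroup.closure_toAddSubmonoid] at hd
  induction hd using AddSubmonoid.closure_induction with
  | mem d hd =>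
    rcases hd with hd | hd
    · exact (hs d hd).1
    · simpa using (hs _ hd).2
  | zero => simp [M.one_mem]
  | add d e _ _ hd he => simpa [unipotentDiag_add] using M.mul_mem hd he

end unipotentDiag

theorem fromBlocks_neg_one_one_zero_inv {n R : Type*} [Fintype n] [DecidableEq n] [CommRing R]
    (A : Matrix n n R) : (fromBlocks A (-1) 1 0)⁻¹ = fromBlocks 0 1 (-1) A :=
  inv_eq_right_inv (by simp [fromBlocks_multiply, ← fromBlocks_one])

theorem transferQ1D_mul_inv (D : ℕ) (E : ℝ) (v w : Fin D → ℝ) :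
    transferQ1D D E v * (transferQ1D D E w)⁻¹ = unipotentDiag (v - w) := by
  rw [transferQ1D, transferQ1D, fromBlocks_neg_one_one_zero_inv, fromBlocks_multiply, unipotentDiag]
  simp [diagonal_sub]

theorem unipotentDiag_intCast_mem_matGenGroup {D : ℕ} {E : ℝ}
    {S : Set (Matrix (Fin D ⊕ Fin D) (Fin D ⊕ Fin D) ℝ)}
    (hS : ∀ v : Fin D → ℝ, (∀ i, v i = 0 ∨ v i = 1) → transferQ1D D E v ∈ S)
    (z : Fin D → ℤ) :
    unipotentDiag (fun i => (z i : ℝ)) ∈ matGenGroup S := by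
  change _ ∈ Submonoid.closure (S ∪ Inv.inv '' S)
  have hdiff : ∀ v w : Fin D → ℝ, (∀ i, v i = 0 ∨ v i = 1) →
      (∀ i, w i = 0 ∨ w i = 1) →
      unipotentDiag (v - w) ∈ Submonoid.closure (S ∪ Inv.inv '' S) := fun v w hv hw => by
    rw [← transferQ1D_mul_inv D E]
    exact Submonoid.mul_mem _ (Submonoid.subset_closure (.inl (hS v hv)))
      (Submonoid.subset_closure (.inr ⟨_, hS w hw, rfl⟩))
  have hsingle : ∀ i j,
      (Pi.single i 1 : Fin D → ℝ) j = 0 ∨ (Pi.single i 1 : Fin D → ℝ) j = 1 :=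
    fun i j => by by_cases h : j = i <;> simp [h]
  have hzero : ∀ j, (0 : Fin D → ℝ) j = 0 ∨ (0 : Fin D → ℝ) j = 1 := fun _ => .inl rfl
  refine unipotentDiag_mem_of_mem_closure ?_ (Pi.intCast_mem_closure_range_single z)
  rintro _ ⟨i, rfl⟩
  exact ⟨by simpa using hdiff _ 0 (hsingle i) hzero, by simpa using hdiff 0 _ hzero (hsingle i)⟩

theorem polynomial_vanishes_on_unipotent_diagonal_general (D : ℕ) (E : ℝ)
    (P : MvPolynomial ((Fin D ⊕ Fin D) × (Fin D ⊕ Fin D)) ℝ)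
    (hP : ∀ M ∈ matGenGroup
        {M | ∃ v : Fin D → ℝ, (∀ i, v i = 0 ∨ v i = 1) ∧ M = transferQ1D D E v},
      MvPolynomial.eval (fun q => M q.1 q.2) P = 0) :
    ∀ d : Fin D → ℝ,
      MvPolynomial.eval
        (fun q => Matrix.fromBlocks 1 (Matrix.diagonal d) 0 1 q.1 q.2) P = 0 := by
  set Q := bind₁ (fun q => unipotentDiag (X : Fin D → MvPolynomial (Fin D) ℝ) q.1 q.2) P
  have hQ : ∀ d, eval d Q = eval (fun q => unipotentDiag d q.1 q.2) P := fun d => by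
    simp only [Q, eval_bind₁, eval_unipotentDiag_X]
  have hQ_zero : Q = 0 := eq_zero_of_eval_intCast_eq_zero fun z =>
    (hQ _).trans <| hP _ <|
      unipotentDiag_intCast_mem_matGenGroup (fun v hv => by exact ⟨v, hv, rfl⟩) z
  intro d
  rw [← unipotentDiag, ← hQ, hQ_zero, map_zero]

/-- Every real polynomial in the matrix entries vanishing on the group generated by the
transfer matrices `T_v(E)`, `v ∈ {0,1}^D`, also vanishes at every block matrix
`[[I, Δ],[0, I]]` with `Δ` an arbitrary real diagonal matrix. -/
theorem polynomial_vanishes_on_unipotent_diagonal (D : ℕ) (hD : 1 ≤ D) (E : ℝ)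
    (P : MvPolynomial ((Fin D ⊕ Fin D) × (Fin D ⊕ Fin D)) ℝ)
    (hP : ∀ M ∈ matGenGroup
        {M | ∃ v : Fin D → ℝ, (∀ i, v i = 0 ∨ v i = 1) ∧ M = transferQ1D D E v},
      MvPolynomial.eval (fun q => M q.1 q.2) P = 0) :
    ∀ d : Fin D → ℝ,
      MvPolynomial.eval
        (fun q => Matrix.fromBlocks 1 (Matrix.diagonal d) 0 1 q.1 q.2) P = 0 :=
  polynomial_vanishes_on_unipotent_diagonal_general D E P hP
end

section
/- Let D ≥ 1. For i,j ∈ {1,…,D} let E_{ij} ∈ M_D(ℝ) be the elementary matrix with entry 1 in position (i,j) and 0 elsewhere, and define the 2D×2D block matrices X_{ij} = (1/2)·[[0, E_{ij}+E_{ji}],[0, 0]] and Y_{ij} = X_{ij}ᵀ. Then the Lie subalgebra of M_{2D}(ℝ) (with bracket [A,B] = AB − BA) generated by the set {X_{ij}, Y_{ij} : i,j ∈ {1,…,D}, |i−j| ≤ 1} is equal to 𝔰𝔭_D(ℝ). -/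
open scoped Matrix

attribute [local instance 100] LieRing.ofAssociativeRing

/-- The symplectic Lie algebra `𝔰𝔭_D(ℝ)`, as a set of `2D × 2D` real matrices `X` with
`Xᵀ J + J X = 0`. -/
def spSet (D : ℕ) : Set (Matrix (Fin D ⊕ Fin D) (Fin D ⊕ Fin D) ℝ) :=
  {X | Xᵀ * Jmat D + Jmat D * X = 0}

/-- The elementary matrix `E_{ij}`. -/
def Emat (D : ℕ) (i j : Fin D) : Matrix (Fin D) (Fin D) ℝ :=
  Matrix.single i j 1

/-- `X_{ij} = (1/2)·[[0, E_{ij}+E_{ji}],[0,0]]`. -/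
noncomputable def Xmat (D : ℕ) (i j : Fin D) : Matrix (Fin D ⊕ Fin D) (Fin D ⊕ Fin D) ℝ :=
  (1 / 2 : ℝ) • Matrix.fromBlocks 0 (Emat D i j + Emat D j i) 0 0

/-- `Y_{ij} = X_{ij}ᵀ`. -/
noncomputable def Ymat (D : ℕ) (i j : Fin D) : Matrix (Fin D ⊕ Fin D) (Fin D ⊕ Fin D) ℝ :=
  (Xmat D i j)ᵀ

/-!
Every element of `𝔰𝔭_D(ℝ)` is `spDiag M + spUpper B + spLower C`, i.e. `[[M, B], [C, -Mᵀ]]`,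
with `B`, `C` symmetric, and on these pieces the bracket is computed blockwise:
`⁅spUpper B, spLower C⁆ = spDiag (B C)`, `⁅spDiag M, spDiag N⁆ = spDiag ⁅M, N⁆`,
`⁅spDiag M, spUpper B⁆ = spUpper (M B + B Mᵀ)`. Hence `⁅X_ij, Y_jj⁆` produces `spDiag E_ij` for
adjacent `i, j`; since `⁅E_ij, E_jk⁆ = E_ik` for `i ≠ k`, chaining along neighbouring indices
yields every `spDiag E_ij`, hence all of `spDiag 𝔤𝔩_D`. Finally
`⁅spDiag E_ij, X_jj⁆ = spUpper (E_ij + E_ji)` and its lower analogue give all symmetric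
off-diagonal blocks. Conversely `𝔰𝔭_D(ℝ)` is closed under the bracket, being the Lie algebra of
`J`-skew-adjoint matrices.
-/

open Matrix

theorem Fin.rel_of_adjacent {D : ℕ} {P : Fin D → Fin D → Prop}
    (adj : ∀ i j : Fin D, ((i : ℤ) - (j : ℤ)).natAbs ≤ 1 → P i j)
    (trans : ∀ i j k, P i j → P j k → i ≠ k → P i k) (i j : Fin D) : P i j := by
  have chain : ∀ k (i j : Fin D), (i : ℕ) + k = j → P i j ∧ P j i := by
    intro k
    induction k with
    | zero =>
      intro i j h
      obtain rfl : i = j := Fin.ext (by omega)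
      exact ⟨adj i i (by simp), adj i i (by simp)⟩
    | succ k ih =>
      intro i j h
      obtain ⟨m, hm⟩ : ∃ m : Fin D, (m : ℕ) = i + k := ⟨⟨i + k, by omega⟩, rfl⟩
      obtain ⟨him, hmi⟩ := ih i m hm.symm
      have hij : i ≠ j := fun h' => by subst h'; omega
      exact ⟨trans i m j him (adj m j (by omega)) hij,
        trans j m i (adj j m (by omega)) hmi hij.symm⟩
  rcases le_total (i : ℕ) j with h | h
  · exact (chain _ i j (Nat.add_sub_cancel' h)).1
  · exact (chain _ j i (Nat.add_sub_cancel' h)).2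

theorem half_smul_add_self {M : Type*} [AddCommGroup M] [Module ℝ M] (x : M) :
    (1 / 2 : ℝ) • (x + x) = x := by
  rw [← two_smul ℝ, smul_smul]
  norm_num

theorem half_smul_add_transpose_of_symm {n : Type*} {B : Matrix n n ℝ} (hB : Bᵀ = B) :
    (1 / 2 : ℝ) • (B + Bᵀ) = B := by
  rw [hB, half_smul_add_self]

section Blocks

variable {R n : Type*} [CommRing R]

def spDiag : Matrix n n R →ₗ[R] Matrix (n ⊕ n) (n ⊕ n) R where
  toFun M := fromBlocks M 0 0 (-Mᵀ)
  map_add' M N := by simp [fromBlocks_add, add_comm]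
  map_smul' c M := by simp [fromBlocks_smul]

def spUpper : Matrix n n R →ₗ[R] Matrix (n ⊕ n) (n ⊕ n) R where
  toFun B := fromBlocks 0 B 0 0
  map_add' B C := by simp [fromBlocks_add]
  map_smul' c B := by simp [fromBlocks_smul]

def spLower : Matrix n n R →ₗ[R] Matrix (n ⊕ n) (n ⊕ n) R where
  toFun C := fromBlocks 0 0 C 0
  map_add' B C := by simp [fromBlocks_add]
  map_smul' c C := by simp [fromBlocks_smul]

theorem spDiag_apply (M : Matrix n n R) : spDiag M = fromBlocks M 0 0 (-Mᵀ) := rfl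
theorem spUpper_apply (B : Matrix n n R) : spUpper B = fromBlocks 0 B 0 0 := rfl
theorem spLower_apply (C : Matrix n n R) : spLower C = fromBlocks 0 0 C 0 := rfl

theorem spDiag_add_spUpper_add_spLower (M B C : Matrix n n R) :
    spDiag M + spUpper B + spLower C = fromBlocks M B C (-Mᵀ) := by
  simp [spDiag_apply, spUpper_apply, spLower_apply, fromBlocks_add]

variable [Fintype n]

theorem lie_spDiag_spDiag (M N : Matrix n n R) :
    ⁅spDiag M, spDiag N⁆ = spDiag (M * N - N * M) := by
  simp only [Ring.lie_def, spDiag_apply, fromBlocks_multiply,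
    sub_eq_add_neg, fromBlocks_neg, fromBlocks_add, transpose_add, transpose_neg, transpose_mul]
  simp

theorem lie_spDiag_spUpper (M B : Matrix n n R) :
    ⁅spDiag M, spUpper B⁆ = spUpper (M * B + B * Mᵀ) := by
  simp only [Ring.lie_def, spDiag_apply, spUpper_apply, fromBlocks_multiply,
    sub_eq_add_neg, fromBlocks_neg, fromBlocks_add]
  simp

theorem lie_spDiag_spLower (M C : Matrix n n R) :
    ⁅spDiag M, spLower C⁆ = spLower (-(Mᵀ * C + C * M)) := by
  simp only [Ring.lie_def, spDiag_apply, spLower_apply, fromBlocks_multiply,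
    sub_eq_add_neg, fromBlocks_neg, fromBlocks_add]
  simp [add_comm]

theorem lie_spUpper_spLower {B C : Matrix n n R} (hB : Bᵀ = B) (hC : Cᵀ = C) :
    ⁅spUpper B, spLower C⁆ = spDiag (B * C) := by
  simp only [Ring.lie_def, spUpper_apply, spLower_apply, spDiag_apply, fromBlocks_multiply,
    sub_eq_add_neg, fromBlocks_neg, fromBlocks_add, transpose_mul, hB, hC]
  simp

theorem transpose_mul_add_mul_eq_zero_iff [DecidableEq n] {Z : Matrix (n ⊕ n) (n ⊕ n) R} :
    Zᵀ * fromBlocks 0 (-1) 1 0 + fromBlocks 0 (-1) 1 0 * Z = 0 ↔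
      ∃ M B C, Bᵀ = B ∧ Cᵀ = C ∧ Z = spDiag M + spUpper B + spLower C := by
  simp_rw [spDiag_add_spUpper_add_spLower]
  obtain ⟨A, B, C, D, rfl⟩ : ∃ A B C D, Z = fromBlocks A B C D :=
    ⟨_, _, _, _, (fromBlocks_toBlocks Z).symm⟩
  simp only [fromBlocks_transpose, fromBlocks_multiply, fromBlocks_add, fromBlocks_inj]
  simp only [mul_zero, zero_mul, mul_one, one_mul, mul_neg, neg_mul, add_zero, zero_add]
  rw [← fromBlocks_zero, fromBlocks_inj]
  constructor
  · rintro ⟨hC, hD, -, hB⟩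
    refine ⟨A, B, C, neg_add_eq_zero.mp hB, add_neg_eq_zero.mp hC, rfl, rfl, rfl, ?_⟩
    rw [neg_add_eq_zero.mp hD, neg_neg]
  · rintro ⟨M, B, C, hB, hC, rfl, rfl, rfl, rfl⟩
    simp [hB, hC]

end Blocks

section Symplectic

variable {D : ℕ}

theorem Xmat_eq_spUpper (i j : Fin D) :
    Xmat D i j = spUpper ((1 / 2 : ℝ) • (Emat D i j + Emat D j i)) :=
  (map_smul spUpper _ _).symm

theorem Ymat_eq_spLower (i j : Fin D) :
    Ymat D i j = spLower ((1 / 2 : ℝ) • (Emat D i j + Emat D j i)) := by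
  rw [Ymat, Xmat_eq_spUpper, spUpper_apply, spLower_apply, fromBlocks_transpose]
  simp [Emat, add_comm]

theorem transpose_half_smul_Emat_add_Emat (i j : Fin D) :
    ((1 / 2 : ℝ) • (Emat D i j + Emat D j i))ᵀ = (1 / 2 : ℝ) • (Emat D i j + Emat D j i) := by
  simp [Emat, add_comm]

theorem smul_Emat (x : ℝ) (i j : Fin D) : x • Emat D i j = single i j x := by
  simp [Emat]

theorem coe_skewAdjointMatricesLieSubalgebra_Jmat :
    (skewAdjointMatricesLieSubalgebra (Jmat D) : Set _) = spSet D := by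
  ext Z
  rw [SetLike.mem_coe, mem_skewAdjointMatricesLieSubalgebra, mem_skewAdjointMatricesSubmodule,
    Matrix.IsSkewAdjoint, Matrix.IsAdjointPair, mul_neg, ← add_eq_zero_iff_eq_neg]
  rfl

theorem Xmat_mem_spSet (i j : Fin D) : Xmat D i j ∈ spSet D :=
  transpose_mul_add_mul_eq_zero_iff.mpr
    ⟨0, _, 0, transpose_half_smul_Emat_add_Emat i j, transpose_zero, by simp [Xmat_eq_spUpper]⟩

theorem Ymat_mem_spSet (i j : Fin D) : Ymat D i j ∈ spSet D :=
  transpose_mul_add_mul_eq_zero_iff.mpr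
    ⟨0, 0, _, transpose_zero, transpose_half_smul_Emat_add_Emat i j, by simp [Ymat_eq_spLower]⟩

def adjacentGenerators (D : ℕ) : Set (Matrix (Fin D ⊕ Fin D) (Fin D ⊕ Fin D) ℝ) :=
  {X | ∃ i j : Fin D, ((i : ℤ) - (j : ℤ)).natAbs ≤ 1 ∧ (X = Xmat D i j ∨ X = Ymat D i j)}

noncomputable def adjacentSpan (D : ℕ) :
    LieSubalgebra ℝ (Matrix (Fin D ⊕ Fin D) (Fin D ⊕ Fin D) ℝ) :=
  LieSubalgebra.lieSpan ℝ _ (adjacentGenerators D)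

theorem Xmat_mem_adjacentSpan {i j : Fin D} (h : ((i : ℤ) - (j : ℤ)).natAbs ≤ 1) :
    Xmat D i j ∈ adjacentSpan D :=
  LieSubalgebra.subset_lieSpan ⟨i, j, h, .inl rfl⟩

theorem Ymat_mem_adjacentSpan {i j : Fin D} (h : ((i : ℤ) - (j : ℤ)).natAbs ≤ 1) :
    Ymat D i j ∈ adjacentSpan D :=
  LieSubalgebra.subset_lieSpan ⟨i, j, h, .inr rfl⟩

theorem spDiag_Emat_mem_adjacentSpan_of_adjacent {i j : Fin D}
    (h : ((i : ℤ) - (j : ℤ)).natAbs ≤ 1) : spDiag (Emat D i j) ∈ adjacentSpan D := by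
  have hjj := Ymat_mem_adjacentSpan (D := D) (i := j) (j := j) (by simp)
  rw [Ymat_eq_spLower, half_smul_add_self] at hjj
  have hbr := (adjacentSpan D).lie_mem (Xmat_mem_adjacentSpan h) hjj
  rw [Xmat_eq_spUpper, lie_spUpper_spLower (transpose_half_smul_Emat_add_Emat i j)
    (by simp [Emat])] at hbr
  by_cases hij : i = j
  · subst hij
    rw [half_smul_add_self] at hbr
    simpa [Emat] using hbr
  · have hprod : (1 / 2 : ℝ) • (Emat D i j + Emat D j i) * Emat D j j =
        (1 / 2 : ℝ) • Emat D i j := by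
      simp [Emat, add_mul, hij]
    rw [hprod, map_smul] at hbr
    simpa using (adjacentSpan D).smul_mem 2 hbr

theorem spDiag_Emat_mem_adjacentSpan (i j : Fin D) : spDiag (Emat D i j) ∈ adjacentSpan D := by
  refine Fin.rel_of_adjacent (fun i j h => spDiag_Emat_mem_adjacentSpan_of_adjacent h)
    (fun i j k hij hjk hik => ?_) i j
  have hbr := (adjacentSpan D).lie_mem hij hjk
  rwa [lie_spDiag_spDiag, show Emat D i j * Emat D j k - Emat D j k * Emat D i j = Emat D i k by
    simp [Emat, Ne.symm hik]] at hbr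

theorem spDiag_mem_adjacentSpan (M : Matrix (Fin D) (Fin D) ℝ) : spDiag M ∈ adjacentSpan D := by
  induction M using Matrix.induction_on' with
  | h_zero => simp
  | h_add M N hM hN => simpa using (adjacentSpan D).add_mem hM hN
  | h_std_basis i j x =>
    rw [← smul_Emat, map_smul]
    exact (adjacentSpan D).smul_mem x (spDiag_Emat_mem_adjacentSpan i j)

theorem spUpper_add_transpose_mem_adjacentSpan (M : Matrix (Fin D) (Fin D) ℝ) :
    spUpper (M + Mᵀ) ∈ adjacentSpan D := by
  induction M using Matrix.induction_on' with
  | h_zero => simp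
  | h_add M N hM hN => simpa [add_add_add_comm] using (adjacentSpan D).add_mem hM hN
  | h_std_basis i j x =>
    have hjj := Xmat_mem_adjacentSpan (D := D) (i := j) (j := j) (by simp)
    rw [Xmat_eq_spUpper, half_smul_add_self] at hjj
    have hbr := (adjacentSpan D).lie_mem (spDiag_Emat_mem_adjacentSpan i j) hjj
    have hprod :
        Emat D i j * Emat D j j + Emat D j j * (Emat D i j)ᵀ = Emat D i j + Emat D j i := by
      simp [Emat]
    rw [lie_spDiag_spUpper, hprod] at hbr
    rw [transpose_single, ← smul_Emat, ← smul_Emat, ← smul_add, map_smul]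
    exact (adjacentSpan D).smul_mem x hbr

theorem spLower_add_transpose_mem_adjacentSpan (M : Matrix (Fin D) (Fin D) ℝ) :
    spLower (M + Mᵀ) ∈ adjacentSpan D := by
  induction M using Matrix.induction_on' with
  | h_zero => simp
  | h_add M N hM hN => simpa [add_add_add_comm] using (adjacentSpan D).add_mem hM hN
  | h_std_basis i j x =>
    have hii := Ymat_mem_adjacentSpan (D := D) (i := i) (j := i) (by simp)
    rw [Ymat_eq_spLower, half_smul_add_self] at hii
    have hbr := (adjacentSpan D).lie_mem (spDiag_Emat_mem_adjacentSpan i j) hii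
    have hprod : -((Emat D i j)ᵀ * Emat D i i + Emat D i i * Emat D i j) =
        -(Emat D i j + Emat D j i) := by
      simp [Emat, add_comm]
    rw [lie_spDiag_spLower, hprod, map_neg, neg_mem_iff] at hbr
    rw [transpose_single, ← smul_Emat, ← smul_Emat, ← smul_add, map_smul]
    exact (adjacentSpan D).smul_mem x hbr

theorem spSet_subset_adjacentSpan : spSet D ⊆ adjacentSpan D := by
  intro Z hZ
  obtain ⟨M, B, C, hB, hC, rfl⟩ := transpose_mul_add_mul_eq_zero_iff.mp hZ
  rw [← half_smul_add_transpose_of_symm hB, ← half_smul_add_transpose_of_symm hC, map_smul,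
    map_smul]
  exact add_mem (add_mem (spDiag_mem_adjacentSpan M)
    ((adjacentSpan D).smul_mem _ (spUpper_add_transpose_mem_adjacentSpan B)))
    ((adjacentSpan D).smul_mem _ (spLower_add_transpose_mem_adjacentSpan C))

end Symplectic

theorem lieSpan_X_Y_eq_sp_general (D : ℕ) :
    (LieSubalgebra.lieSpan ℝ (Matrix (Fin D ⊕ Fin D) (Fin D ⊕ Fin D) ℝ)
        {X | ∃ i j : Fin D, ((i : ℤ) - (j : ℤ)).natAbs ≤ 1 ∧
          (X = Xmat D i j ∨ X = Ymat D i j)} : Set (Matrix (Fin D ⊕ Fin D) (Fin D ⊕ Fin D) ℝ))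
      = spSet D := by
  refine Set.Subset.antisymm ?_ spSet_subset_adjacentSpan
  rw [← coe_skewAdjointMatricesLieSubalgebra_Jmat]
  refine SetLike.coe_subset_coe.mpr (LieSubalgebra.lieSpan_le.mpr ?_)
  rintro _ ⟨i, j, -, rfl | rfl⟩ <;> rw [coe_skewAdjointMatricesLieSubalgebra_Jmat]
  exacts [Xmat_mem_spSet i j, Ymat_mem_spSet i j]

/-- The Lie subalgebra of `M_{2D}(ℝ)` generated by the matrices `X_{ij}`, `Y_{ij}` for
`|i − j| ≤ 1` is the full symplectic Lie algebra `𝔰𝔭_D(ℝ)`. -/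
theorem lieSpan_X_Y_eq_sp (D : ℕ) (hD : 1 ≤ D) :
    (LieSubalgebra.lieSpan ℝ (Matrix (Fin D ⊕ Fin D) (Fin D ⊕ Fin D) ℝ)
        {X | ∃ i j : Fin D, ((i : ℤ) - (j : ℤ)).natAbs ≤ 1 ∧
          (X = Xmat D i j ∨ X = Ymat D i j)} : Set (Matrix (Fin D ⊕ Fin D) (Fin D ⊕ Fin D) ℝ))
      = spSet D :=
  lieSpan_X_Y_eq_sp_general D
end
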